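/- arXiv:2012.06519 — 2 statements merged into one kernel-verified Lean document; each statement's English description precedes it below -/
import Mathlib

section
/- Let 0 < ε ≤ 1/2, d ≥ 2, and p ≥ log d / ε (natural log). Then 1 − d^(−1/p) ≤ ε, and consequently B_q^d ⊆ B_1^d + ε·B_q^d where 1/p + 1/q = 1. -/
/-!
Since `d ^ (-1/p) = exp (-log d / p) ≥ 1 - log d / p`, the hypothesis `log d / ε ≤ p` gives
`1 - d ^ (-1/p) ≤ ε`. For the inclusion, write `x = c • x + (1 - c) • x` with `c = d ^ (-1/p)`.
Hölder's inequality against the constant vector gives `‖x‖₁ ≤ d ^ (1/p) ‖x‖_q`, so `c • x` lies in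
the `ℓ¹` ball, and `(1 - c) • x = ε • (((1 - c) / ε) • x)` with `0 ≤ (1 - c) / ε ≤ 1`.
-/

open Finset Real

lemma Real.one_sub_rpow_neg_one_div_le_log_div {a : ℝ} (ha : 0 < a) (p : ℝ) :
    1 - a ^ (-(1 / p)) ≤ log a / p := by
  have h := add_one_le_exp (-(log a / p))
  rw [rpow_def_of_pos ha, show log a * -(1 / p) = -(log a / p) by ring]
  linarith

section LpBalls

variable {ι : Type*} [Fintype ι] {p q : ℝ}

lemma sum_abs_le_card_rpow_of_sum_abs_rpow_le_one (hpq : p.HolderConjugate q) {x : ι → ℝ}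
    (hx : ∑ i, |x i| ^ q ≤ 1) : ∑ i, |x i| ≤ (Fintype.card ι : ℝ) ^ (1 / p) := by
  have holder := inner_le_Lp_mul_Lq univ (fun _ ↦ (1 : ℝ)) (fun i ↦ |x i|) hpq
  simp only [one_mul, abs_abs, abs_one, one_rpow, sum_const, card_univ, nsmul_eq_mul,
    mul_one] at holder
  have hx' : (∑ i, |x i| ^ q) ^ (1 / q) ≤ 1 :=
    rpow_le_one (sum_nonneg fun i _ ↦ by positivity) hx hpq.symm.one_div_nonneg
  calc ∑ i, |x i| ≤ (Fintype.card ι : ℝ) ^ (1 / p) * (∑ i, |x i| ^ q) ^ (1 / q) := holder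
    _ ≤ (Fintype.card ι : ℝ) ^ (1 / p) := mul_le_of_le_one_right (by positivity) hx'

lemma sum_abs_smul (c : ℝ) (x : ι → ℝ) : ∑ i, |(c • x) i| = |c| * ∑ i, |x i| := by
  simp only [Pi.smul_apply, smul_eq_mul, abs_mul, mul_sum]

lemma sum_abs_rpow_smul {s : ℝ} (hs : 0 ≤ s) (x : ι → ℝ) :
    ∑ i, |(s • x) i| ^ q = s ^ q * ∑ i, |x i| ^ q := by
  simp only [Pi.smul_apply, smul_eq_mul, abs_mul, abs_of_nonneg hs,
    mul_rpow hs (abs_nonneg _), mul_sum]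

lemma exists_eq_add_smul_of_one_sub_card_rpow_le [Nonempty ι] (hpq : p.HolderConjugate q)
    {ε : ℝ} (hε : 0 < ε) (hcard : 1 - (Fintype.card ι : ℝ) ^ (-(1 / p)) ≤ ε) {x : ι → ℝ}
    (hx : ∑ i, |x i| ^ q ≤ 1) :
    ∃ a b : ι → ℝ, ∑ i, |a i| ≤ 1 ∧ ∑ i, |b i| ^ q ≤ 1 ∧ x = a + ε • b := by
  set n : ℝ := (Fintype.card ι : ℝ)
  have hn : 1 ≤ n := Nat.one_le_cast.2 Fintype.card_pos
  set c := n ^ (-(1 / p))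
  have hc₀ : 0 ≤ c := by positivity
  have hc₁ : c ≤ 1 := rpow_le_one_of_one_le_of_nonpos hn (neg_nonpos.2 hpq.one_div_nonneg)
  set s := (1 - c) / ε
  have hs₀ : 0 ≤ s := div_nonneg (sub_nonneg.2 hc₁) hε.le
  have hs₁ : s ≤ 1 := (div_le_one hε).2 hcard
  refine ⟨c • x, s • x, ?_, ?_, ?_⟩
  · calc ∑ i, |(c • x) i| = c * ∑ i, |x i| := by rw [sum_abs_smul, abs_of_nonneg hc₀]
      _ ≤ c * n ^ (1 / p) :=
        mul_le_mul_of_nonneg_left (sum_abs_le_card_rpow_of_sum_abs_rpow_le_one hpq hx) hc₀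
      _ = 1 := by rw [← rpow_add (by positivity), neg_add_cancel, rpow_zero]
  · rw [sum_abs_rpow_smul hs₀]
    exact mul_le_one₀ (rpow_le_one hs₀ hs₁ hpq.symm.nonneg) (sum_nonneg fun i _ ↦ by positivity) hx
  · have hεs : ε * s = 1 - c := mul_div_cancel₀ _ hε.ne'
    rw [smul_smul, hεs, ← add_smul, add_sub_cancel, one_smul]

end LpBalls

theorem stmt_2_general (ε : ℝ) (hε0 : 0 < ε) (d : ℕ) (hd : 2 ≤ d)
    (p q : ℝ) (hq : 1 < q) (hpq : 1 / p + 1 / q = 1)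
    (hp : Real.log d / ε ≤ p) :
    1 - (d : ℝ) ^ (-(1 / p)) ≤ ε ∧
    (∀ x : Fin d → ℝ, (∑ i, |x i| ^ q) ≤ 1 →
      ∃ a b : Fin d → ℝ, (∑ i, |a i|) ≤ 1 ∧ (∑ i, |b i| ^ q) ≤ 1 ∧
        x = a + ε • b) := by
  have hconj : p.HolderConjugate q :=
    (holderConjugate_iff.2 ⟨hq, by rw [add_comm]; simpa only [one_div] using hpq⟩).symm
  have hd₀ : (0 : ℝ) < d := by exact_mod_cast (by omega : 0 < d)
  have hlog : log d / p ≤ ε := by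
    rw [div_le_iff₀ hconj.pos]
    rwa [div_le_iff₀ hε0, mul_comm] at hp
  have hbound : 1 - (d : ℝ) ^ (-(1 / p)) ≤ ε :=
    (one_sub_rpow_neg_one_div_le_log_div hd₀ p).trans hlog
  have : Nonempty (Fin d) := ⟨⟨0, by omega⟩⟩
  refine ⟨hbound, fun x hx ↦ exists_eq_add_smul_of_one_sub_card_rpow_le hconj hε0 ?_ hx⟩
  rwa [Fintype.card_fin]

theorem stmt_2 (ε : ℝ) (hε0 : 0 < ε) (hε1 : ε ≤ 1 / 2) (d : ℕ) (hd : 2 ≤ d)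
    (p q : ℝ) (hq : 1 < q) (hpq : 1 / p + 1 / q = 1)
    (hp : Real.log d / ε ≤ p) :
    1 - (d : ℝ) ^ (-(1 / p)) ≤ ε ∧
    (∀ x : Fin d → ℝ, (∑ i, |x i| ^ q) ≤ 1 →
      ∃ a b : Fin d → ℝ, (∑ i, |a i|) ≤ 1 ∧ (∑ i, |b i| ^ q) ≤ 1 ∧
        x = a + ε • b) :=
  stmt_2_general ε hε0 d hd p q hq hpq hp
end

section
/- Let q ∈ (1,2] with Hölder conjugate p, d ≥ 2, n ≥ 3, l ∈ {2,…,d}, k ∈ {3,…,n}. Define rows A_1 = −2^(−1/p) e_1 + 2^(−1/p) e_l, A_k = e_1, and A_i = 2^(−1/p) e_1 + 2^(−1/p) e_l for all other i. Then max over x ∈ B_q^d of min over i ∈ [n] of A_i·x equals 1 / (1 + (2^(1−1/q) + 1)^q)^(1/q), attained at x = (e_1 + (2^(1−1/q)+1) e_l) / (1 + (2^(1−1/q)+1)^q)^(1/q). -/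
/-! With `a = 2^(-1/p)` and `c = 2^(1/p) + 1`, so that `a (c - 1) = 1`, the point
`x̄ = σ (e₁ + c e_l)` lies on the unit `ℓ^q` sphere because `σ^q (1 + c^q) = 1`; at `x̄` the rows
`A₁` and `A_k` equal `σ` and the others exceed it. Conversely, a point `x` of the ball with
`x₁ > σ` has `x_l ≤ c σ`, for otherwise `|x₁|^q + |x_l|^q > σ^q + (c σ)^q = 1`; then
`A₁ · x = a (x_l - x₁) < a (c - 1) σ = σ`. -/

open Finset Real

lemma add_le_sum_of_nonneg {ι M : Type*} [Fintype ι] [AddCommMonoid M] [PartialOrder M]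
    [IsOrderedAddMonoid M] {f : ι → M} {i j : ι} (hij : i ≠ j) (hf : ∀ t, 0 ≤ f t) :
    f i + f j ≤ ∑ t, f t := by
  classical
  rw [← sum_pair hij]
  exact sum_le_sum_of_subset_of_nonneg (subset_univ _) fun t _ _ => hf t

lemma sum_mul_eq_of_support_subset_pair {ι : Type*} [Fintype ι] {w : ι → ℝ} {i j : ι}
    (hij : i ≠ j) (hw : ∀ t, t ≠ i → t ≠ j → w t = 0) (y : ι → ℝ) :
    ∑ t, w t * y t = w i * y i + w j * y j :=
  Fintype.sum_eq_add i j hij fun t ht => by rw [hw t ht.1 ht.2, zero_mul]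

lemma sum_ite_ite_mul {ι : Type*} [Fintype ι] [DecidableEq ι] {i j : ι} (hij : i ≠ j)
    (u v : ℝ) (y : ι → ℝ) :
    ∑ t, (if t = i then u else if t = j then v else 0) * y t = u * y i + v * y j := by
  rw [sum_mul_eq_of_support_subset_pair hij fun t hi hj => by simp [hi, hj]]
  simp [hij.symm]

lemma sum_ite_or_mul {ι : Type*} [Fintype ι] [DecidableEq ι] {i j : ι} (hij : i ≠ j)
    (u : ℝ) (y : ι → ℝ) :
    ∑ t, (if t = i ∨ t = j then u else 0) * y t = u * y i + u * y j := by
  rw [sum_mul_eq_of_support_subset_pair hij fun t hi hj => by simp [hi, hj]]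
  simp

lemma rpow_add_mul_rpow_eq_one {q c : ℝ} (hq : q ≠ 0) (hc : 0 ≤ c) :
    (1 / (1 + c ^ q) ^ (1 / q)) ^ q + (c * (1 / (1 + c ^ q) ^ (1 / q))) ^ q = 1 := by
  have hT : 0 < 1 + c ^ q := by positivity
  have hs : (1 / (1 + c ^ q) ^ (1 / q)) ^ q = 1 / (1 + c ^ q) := by
    rw [one_div, inv_rpow (by positivity), ← rpow_mul hT.le, one_div_mul_cancel hq, rpow_one,
      one_div]
  rw [mul_rpow hc (by positivity), hs]
  field_simp

lemma le_of_rpow_add_rpow_le {q s t x y : ℝ} (hq : 0 < q) (hs : 0 ≤ s) (ht : 0 ≤ t)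
    (hst : s ^ q + t ^ q = 1) (hxy : |x| ^ q + |y| ^ q ≤ 1) (hx : s < x) : y ≤ t := by
  by_contra! hy
  have hsx : s ^ q < |x| ^ q := rpow_lt_rpow hs (hx.trans_le (le_abs_self x)) hq
  have hty : t ^ q < |y| ^ q := rpow_lt_rpow ht (hy.trans_le (le_abs_self y)) hq
  linarith

lemma le_or_neg_mul_add_mul_le {q a c σ x y : ℝ} (hq : 0 < q) (ha : 0 < a) (hσ : 0 ≤ σ)
    (hc : 0 ≤ c) (hac : a * (c - 1) = 1) (hσc : σ ^ q + (c * σ) ^ q = 1)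
    (hxy : |x| ^ q + |y| ^ q ≤ 1) : x ≤ σ ∨ -a * x + a * y ≤ σ := by
  refine (le_or_gt x σ).imp id fun hx => ?_
  have hy : y ≤ c * σ := le_of_rpow_add_rpow_le hq hσ (mul_nonneg hc hσ) hσc hxy hx
  linear_combination σ * hac + a * hx.le + a * hy

theorem stmt_12 (d n : ℕ) (hd : 2 ≤ d) (hn : 3 ≤ n)
    (p q : ℝ) (hq1 : 1 < q) (hpq : 1 / p + 1 / q = 1)
    (l : Fin d) (hl : l ≠ ⟨0, by omega⟩)
    (k : Fin n)
    (A : Fin n → Fin d → ℝ)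
    (hA0 : A ⟨0, by omega⟩ = fun j => if j = ⟨0, by omega⟩ then -((2:ℝ) ^ (-(1 / p)))
                          else if j = l then (2:ℝ) ^ (-(1 / p)) else 0)
    (hAk : A k = fun j => if j = ⟨0, by omega⟩ then 1 else 0)
    (hAi : ∀ i : Fin n, i ≠ ⟨0, by omega⟩ → i ≠ k →
      A i = fun j => if j = ⟨0, by omega⟩ ∨ j = l then (2:ℝ) ^ (-(1 / p)) else 0)
    (σ : ℝ) (hσ : σ = 1 / (1 + ((2:ℝ) ^ (1 - 1 / q) + 1) ^ q) ^ (1 / q))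
    (xbar : Fin d → ℝ)
    (hxbar : xbar = fun j => if j = ⟨0, by omega⟩ then σ
                             else if j = l then ((2:ℝ) ^ (1 - 1 / q) + 1) * σ else 0) :
    (∑ j, |xbar j| ^ q) ≤ 1 ∧
    (∀ i, σ ≤ ∑ j, A i j * xbar j) ∧
    (∀ x : Fin d → ℝ, (∑ j, |x j| ^ q) ≤ 1 → ∃ i, (∑ j, A i j * x j) ≤ σ) := by
  set e₀ : Fin d := ⟨0, by omega⟩
  set a : ℝ := (2:ℝ) ^ (-(1 / p))
  set c : ℝ := (2:ℝ) ^ (1 - 1 / q) + 1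
  have hq : 0 < q := by linarith
  have ha : 0 < a := by positivity
  have hac : a * (c - 1) = 1 := by
    rw [add_sub_cancel_right, ← rpow_add two_pos, show 1 / p = 1 - 1 / q by linarith,
      neg_add_cancel, rpow_zero]
  have hc : 0 < c := by positivity
  clear_value a c
  have hσ_pos : 0 < σ := by rw [hσ]; positivity
  have hnorm : σ ^ q + (c * σ) ^ q = 1 := hσ ▸ rpow_add_mul_rpow_eq_one hq.ne' (by positivity)
  have hxbar₀ : xbar e₀ = σ := by simp [hxbar, e₀]
  have hxbarl : xbar l = c * σ := by simp [hxbar, hl]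
  refine ⟨?_, fun i => ?_, fun x hx => ?_⟩
  · rw [Fintype.sum_eq_add e₀ l hl.symm fun j hj => by simp [hxbar, hj.1, hj.2, zero_rpow hq.ne'],
      hxbar₀, hxbarl, abs_of_pos hσ_pos, abs_of_pos (by positivity), hnorm]
  · by_cases hi₀ : i = ⟨0, by omega⟩
    · rw [hi₀, hA0, sum_ite_ite_mul hl.symm, hxbar₀, hxbarl]
      linear_combination (-σ) * hac
    by_cases hik : i = k
    · simp [hik, hAk, hxbar₀]
    · rw [hAi i hi₀ hik, sum_ite_or_mul hl.symm, hxbar₀, hxbarl]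
      linear_combination (-σ) * hac + 2 * (mul_pos ha hσ_pos).le
  · rcases le_or_neg_mul_add_mul_le hq ha hσ_pos.le hc.le hac hnorm
      ((add_le_sum_of_nonneg hl.symm fun t => by positivity).trans hx) with h | h
    · exact ⟨k, by simpa [hAk]⟩
    · exact ⟨⟨0, by omega⟩, by rwa [hA0, sum_ite_ite_mul hl.symm]⟩
end
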